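/- For γ ∈ (0,1) and integer d ≥ 3, the regularized incomplete beta function satisfies I_{1-γ²}((d-1)/2, 1/2) ≤ (1/γ) · (2/(d-1)) · (1-γ²)^((d-1)/2) · √(d/(2π)). -/

import Mathlib

/-- The incomplete beta function `B(x, a, b) = ∫₀ˣ t^(a-1) (1-t)^(b-1) dt`. -/
noncomputable def incBeta (x a b : ℝ) : ℝ :=
  ∫ t in (0:ℝ)..x, t ^ (a - 1) * (1 - t) ^ (b - 1)

/-- The regularized incomplete beta function `I_x(a,b) = B(x,a,b) / B(1,a,b)`. -/
noncomputable def regIncBeta (x a b : ℝ) : ℝ := incBeta x a b / incBeta 1 a b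

/-!
With `x = 1 - γ²`, the factor `(1 - t)^(-1/2)` is at most `(1 - x)^(-1/2) = 1/γ` on `[0, x]`,
so the numerator `B(x, a, 1/2)` is at most `x^a / (a γ)`. The denominator is
`B(a, 1/2) = Γ(a) √π / Γ(a + 1/2)`, and log-convexity of `Γ` between `a` and `a + 1` gives
Gautschi's inequality `Γ(a + 1/2) ≤ √a Γ(a)`, hence `B(a, 1/2) ≥ √(π / a)`.
With `a = (d - 1)/2 ≤ d/2` this is the bound.
-/

open Real

lemma incBeta_one_eq_re_betaIntegral (a b : ℝ) :
    incBeta 1 a b = (Complex.betaIntegral a b).re := by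
  rw [incBeta, Complex.betaIntegral, ← Complex.ofReal_re (∫ t in (0:ℝ)..1, _),
    ← intervalIntegral.integral_ofReal]
  congr 1
  refine intervalIntegral.integral_congr fun t ht => ?_
  rw [Set.uIcc_of_le zero_le_one] at ht
  push_cast
  rw [Complex.ofReal_cpow ht.1, Complex.ofReal_cpow (sub_nonneg.2 ht.2)]
  push_cast
  ring

lemma incBeta_one_eq_beta {a b : ℝ} (ha : 0 < a) (hb : 0 < b) :
    incBeta 1 a b = ProbabilityTheory.beta a b := by
  rw [incBeta_one_eq_re_betaIntegral, ProbabilityTheory.beta_eq_betaIntegralReal a b ha hb]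

lemma Real.Gamma_add_one_half_le {a : ℝ} (ha : 0 < a) : Gamma (a + 1 / 2) ≤ √a * Gamma a := by
  have hΓ := (Gamma_pos_of_pos ha).le
  calc Gamma (a + 1 / 2) = Gamma (1 / 2 * a + 1 / 2 * (a + 1)) := by ring_nf
    _ ≤ Gamma a ^ (1 / 2 : ℝ) * Gamma (a + 1) ^ (1 / 2 : ℝ) :=
      Gamma_mul_add_mul_le_rpow_Gamma_mul_rpow_Gamma ha (by linarith) one_half_pos one_half_pos
        (by norm_num)
    _ = √(a * Gamma a ^ 2) := by
      rw [Gamma_add_one ha.ne', ← mul_rpow hΓ (mul_nonneg ha.le hΓ), ← sqrt_eq_rpow]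
      ring_nf
    _ = √a * Gamma a := by rw [sqrt_mul ha.le, sqrt_sq hΓ]

lemma sqrt_pi_div_le_beta_half {a : ℝ} (ha : 0 < a) :
    √(π / a) ≤ ProbabilityTheory.beta a (1 / 2) := by
  rw [ProbabilityTheory.beta, Gamma_one_half_eq, sqrt_div pi_pos.le,
    div_le_div_iff₀ (sqrt_pos.2 ha) (Gamma_pos_of_pos (by linarith))]
  calc √π * Gamma (a + 1 / 2) ≤ √π * (√a * Gamma a) := by gcongr; exact Gamma_add_one_half_le ha
    _ = Gamma a * √π * √a := by ring

lemma incBeta_le_of_le_one {x a b : ℝ} (ha : 0 < a) (hb : b ≤ 1) (hx₀ : 0 ≤ x) (hx₁ : x < 1) :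
    incBeta x a b ≤ (1 - x) ^ (b - 1) * (x ^ a / a) := by
  have hpow : IntervalIntegrable (fun t : ℝ => t ^ (a - 1)) MeasureTheory.volume 0 x :=
    intervalIntegral.intervalIntegrable_rpow' (by linarith)
  have hcont : ContinuousOn (fun t : ℝ => (1 - t) ^ (b - 1)) (Set.uIcc 0 x) := by
    refine ContinuousOn.rpow_const (by fun_prop) fun t ht => Or.inl ?_
    rw [Set.uIcc_of_le hx₀] at ht
    linarith [ht.2]
  calc incBeta x a b ≤ ∫ t in (0:ℝ)..x, t ^ (a - 1) * (1 - x) ^ (b - 1) := by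
        refine intervalIntegral.integral_mono_on hx₀ (hpow.mul_continuousOn hcont)
          (hpow.mul_const _) fun t ht => mul_le_mul_of_nonneg_left
          (rpow_le_rpow_of_nonpos (by linarith) (by linarith [ht.2]) (by linarith))
          (rpow_nonneg ht.1 _)
    _ = (1 - x) ^ (b - 1) * (x ^ a / a) := by
      rw [intervalIntegral.integral_mul_const, integral_rpow (Or.inl (by linarith)),
        sub_add_cancel, zero_rpow ha.ne', sub_zero, mul_comm]

lemma regIncBeta_half_le {x a : ℝ} (ha : 0 < a) (hx₀ : 0 ≤ x) (hx₁ : x < 1) :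
    regIncBeta x a (1 / 2) ≤ (√(1 - x))⁻¹ * (x ^ a / a) * √(a / π) := by
  have hnum := incBeta_le_of_le_one ha (by norm_num : (1:ℝ) / 2 ≤ 1) hx₀ hx₁
  rw [show (1:ℝ) / 2 - 1 = -(1 / 2) by norm_num, rpow_neg (by linarith), ← sqrt_eq_rpow] at hnum
  have hden := sqrt_pi_div_le_beta_half ha
  rw [← incBeta_one_eq_beta ha one_half_pos] at hden
  calc regIncBeta x a (1 / 2) ≤ (√(1 - x))⁻¹ * (x ^ a / a) / √(π / a) := by
        rw [regIncBeta]
        gcongr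
    _ = (√(1 - x))⁻¹ * (x ^ a / a) * √(a / π) := by
      rw [div_eq_mul_inv, ← sqrt_inv (π / a), inv_div]

/-- Upper bound on the regularized incomplete beta function. -/
theorem regIncBeta_upper_bound (γ : ℝ) (hγ : γ ∈ Set.Ioo (0:ℝ) 1) (d : ℕ) (hd : 3 ≤ d) :
    regIncBeta (1 - γ ^ 2) (((d:ℝ) - 1) / 2) (1 / 2) ≤
      (1 / γ) * (2 / ((d:ℝ) - 1)) * (1 - γ ^ 2) ^ (((d:ℝ) - 1) / 2) *
        Real.sqrt (d / (2 * Real.pi)) := by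
  obtain ⟨hγ₀, hγ₁⟩ := hγ
  have hd₂ : (2:ℝ) ≤ d := by exact_mod_cast (by omega : 2 ≤ d)
  have ha : 0 < ((d:ℝ) - 1) / 2 := by linarith
  have hx₀ : 0 ≤ 1 - γ ^ 2 := by nlinarith
  calc regIncBeta (1 - γ ^ 2) (((d:ℝ) - 1) / 2) (1 / 2)
      ≤ (√(1 - (1 - γ ^ 2)))⁻¹ * ((1 - γ ^ 2) ^ (((d:ℝ) - 1) / 2) / (((d:ℝ) - 1) / 2)) *
          √((((d:ℝ) - 1) / 2) / π) := regIncBeta_half_le ha hx₀ (by nlinarith)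
    _ = (1 / γ) * (2 / ((d:ℝ) - 1)) * (1 - γ ^ 2) ^ (((d:ℝ) - 1) / 2) *
          √((((d:ℝ) - 1) / 2) / π) := by
      rw [sub_sub_cancel, sqrt_sq hγ₀.le, div_div_eq_mul_div]
      ring
    _ ≤ (1 / γ) * (2 / ((d:ℝ) - 1)) * (1 - γ ^ 2) ^ (((d:ℝ) - 1) / 2) * √(d / (2 * π)) := by
      refine mul_le_mul_of_nonneg_left (sqrt_le_sqrt ?_) ?_
      · rw [div_div]
        gcongr
        linarith
      · have : 0 < (d:ℝ) - 1 := by linarith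
        have := rpow_nonneg hx₀ (((d:ℝ) - 1) / 2)
        positivity
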